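/- Define a bilinear form on ℝ[x] by {x^a, x^b} = 0 if a + b is odd, and {x^a, x^b} = (1/2)^p · (1/2 + k)(3/2 + k)···(p - 1/2 + k) (the rising factorial (k + 1/2)_p times 2^{-p}) if a + b = 2p. Then this form is symmetric, and it is degenerate (has nonzero radical) if and only if k ∈ {-1/2 - m : m ∈ ℤ≥0}. -/

import Mathlib

open Polynomial

/-- The weight of the Shapovalov form on monomials: `{x^a, x^b}` depends only on
`n = a + b`; it is `0` for odd `n` and `(1/2)^p (k+1/2)_p` for `n = 2p`. -/
noncomputable def shapWeight (k : ℝ) (n : ℕ) : ℝ :=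
  if n % 2 = 1 then 0
  else (1/2 : ℝ) ^ (n / 2) * ∏ i ∈ Finset.range (n / 2), (k + 1/2 + i)

/-- The Shapovalov bilinear form on `ℝ[x]`. -/
noncomputable def shapForm (k : ℝ) (f g : ℝ[X]) : ℝ :=
  f.sum fun a ca => g.sum fun b cb => ca * cb * shapWeight k (a + b)

/-!
Write `{f, g} = L (f * g)` for the moment functional `L (X ^ n) = shapWeight k n`. The
recurrence `4 w(n + 2) = (n + 2k + 1) w(n)` of the weights says
`4 L (X² h) = L (X h') + (2k + 1) L h` for every `h`, so the radical `{f | L (f * ·) = 0}` is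
stable under the Euler operator `X d/dX`. That operator acts on `X ^ n` by the distinct
eigenvalues `n`, so a nonzero radical contains some `X ^ n`, whence
`shapWeight k (2n) = 2⁻ⁿ (k + 1/2)ₙ = 0`. Conversely, if `k = -1/2 - m` then every weight of
index at least `2m + 2` vanishes, so `X ^ (2m + 2)` lies in the radical.
-/

namespace Polynomial

theorem coeff_X_mul_derivative {R : Type*} [Semiring R] (p : R[X]) (n : ℕ) :
    (X * derivative p).coeff n = p.coeff n * n := by
  cases n with
  | zero => simp
  | succ n => rw [coeff_X_mul, coeff_derivative]; push_cast; rfl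

theorem X_mul_derivative_monomial {R : Type*} [Semiring R] (n : ℕ) (c : R) :
    X * derivative (monomial n c) = monomial n (c * n) := by
  ext a
  rw [coeff_X_mul_derivative, coeff_monomial, coeff_monomial]
  split_ifs with h <;> simp [h]

theorem exists_X_pow_mem_of_X_mul_derivative_mem {K : Type*} [Field K] [CharZero K]
    {S : Submodule K K[X]} (hS : ∀ f ∈ S, X * derivative f ∈ S) {f : K[X]} (hf : f ∈ S) (hf0 : f ≠ 0) :
    ∃ n, X ^ n ∈ S := by
  induction h : f.natDegree using Nat.strong_induction_on generalizing f with
  | _ n ih =>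
    -- `g` vanishes iff `f` is a monomial, and otherwise has smaller degree than `f`.
    set g := X * derivative f - (n : K) • f
    have hg : g ∈ S := S.sub_mem (hS f hf) (S.smul_mem _ hf)
    have hgcoeff : ∀ a, g.coeff a = f.coeff a * (a - n) := fun a => by
      rw [coeff_sub, coeff_X_mul_derivative, coeff_smul, smul_eq_mul]; ring
    by_cases hg0 : g = 0
    · have hmono : f = C f.leadingCoeff * X ^ n := by
        ext a
        rw [coeff_C_mul_X_pow]
        split_ifs with ha
        · rw [ha, ← h]; rfl
        · have := hgcoeff a
          rw [hg0, coeff_zero, eq_comm, mul_eq_zero, sub_eq_zero, Nat.cast_inj] at this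
          exact this.resolve_right ha
      refine ⟨n, ?_⟩
      have hlc : f.leadingCoeff ≠ 0 := leadingCoeff_ne_zero.2 hf0
      rw [hmono, ← smul_eq_C_mul] at hf
      simpa [hlc] using S.smul_mem f.leadingCoeff⁻¹ hf
    · refine ih g.natDegree ?_ hg hg0 rfl
      refine lt_of_le_of_ne ?_ fun hdeg => ?_
      · rw [← h]
        exact natDegree_le_iff_coeff_eq_zero.2 fun a ha => by
          rw [hgcoeff, coeff_eq_zero_of_natDegree_lt ha, zero_mul]
      · exact hg0 <| leadingCoeff_eq_zero.1 <| by
          rw [leadingCoeff, hdeg, hgcoeff, sub_self, mul_zero]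

end Polynomial

section Shapovalov

variable (k : ℝ)

theorem shapWeight_odd {n : ℕ} (h : n % 2 = 1) : shapWeight k n = 0 := if_pos h

theorem shapWeight_two_mul (p : ℕ) :
    shapWeight k (2 * p) = (1/2) ^ p * ∏ i ∈ Finset.range p, (k + 1/2 + i) := by
  rw [shapWeight, if_neg (by omega), Nat.mul_div_cancel_left p two_pos]

theorem shapWeight_two_mul_eq_zero_iff (p : ℕ) :
    shapWeight k (2 * p) = 0 ↔ ∃ i < p, k = -(1/2) - i := by
  simp only [shapWeight_two_mul, mul_eq_zero, pow_eq_zero_iff', Finset.prod_eq_zero_iff,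
    Finset.mem_range]
  rw [eq_false (one_div_ne_zero two_ne_zero), false_and, false_or]
  exact exists_congr fun i => and_congr_right fun _ => by constructor <;> intro h <;> linarith

theorem shapWeight_eq_zero_of_le {m n : ℕ} (hk : k = -(1/2) - m) (hn : 2 * m + 2 ≤ n) :
    shapWeight k n = 0 := by
  obtain ⟨j, rfl | rfl⟩ := Nat.even_or_odd' n
  · exact (shapWeight_two_mul_eq_zero_iff k j).2 ⟨m, by omega, hk⟩
  · exact shapWeight_odd k (by omega)

theorem shapWeight_add_two (n : ℕ) :
    4 * shapWeight k (n + 2) = (n + 2 * k + 1) * shapWeight k n := by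
  rcases Nat.even_or_odd' n with ⟨p, rfl | rfl⟩
  · rw [show 2 * p + 2 = 2 * (p + 1) by ring, shapWeight_two_mul, shapWeight_two_mul,
      Finset.prod_range_succ, pow_succ]
    push_cast; ring
  · rw [shapWeight_odd k (by omega), shapWeight_odd k (by omega), mul_zero, mul_zero]

noncomputable def shapFunctional : ℝ[X] →ₗ[ℝ] ℝ :=
  lsum fun n => shapWeight k n • LinearMap.id

theorem shapFunctional_monomial (n : ℕ) (c : ℝ) :
    shapFunctional k (monomial n c) = c * shapWeight k n := by
  simp [shapFunctional, mul_comm]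

theorem shapForm_eq_shapFunctional_mul (f g : ℝ[X]) :
    shapForm k f g = shapFunctional k (f * g) := by
  simp only [shapForm, mul_eq_sum_sum, map_sum, Polynomial.sum_def, shapFunctional_monomial]

theorem shapFunctional_X_sq_mul (h : ℝ[X]) :
    4 * shapFunctional k (X ^ 2 * h) =
      shapFunctional k (X * derivative h) + (2 * k + 1) * shapFunctional k h := by
  induction h using Polynomial.induction_on' with
  | add p q hp hq =>
    simp only [mul_add, map_add]
    linear_combination hp + hq
  | monomial n c =>
    rw [X_pow_mul_monomial, X_mul_derivative_monomial, shapFunctional_monomial,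
      shapFunctional_monomial, shapFunctional_monomial]
    linear_combination c * shapWeight_add_two k n

noncomputable def shapRadical : Submodule ℝ ℝ[X] :=
  LinearMap.ker ((LinearMap.mul ℝ ℝ[X]).compr₂ (shapFunctional k))

variable {k}

theorem mem_shapRadical {f : ℝ[X]} : f ∈ shapRadical k ↔ ∀ g, shapForm k f g = 0 := by
  simp [shapRadical, LinearMap.ext_iff, shapForm_eq_shapFunctional_mul]

theorem X_mul_derivative_mem_shapRadical {f : ℝ[X]} (hf : f ∈ shapRadical k) :
    X * derivative f ∈ shapRadical k := by
  simp only [mem_shapRadical, shapForm_eq_shapFunctional_mul] at hf ⊢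
  intro g
  have hEuler := shapFunctional_X_sq_mul k (f * g)
  have hsplit : X * derivative f * g = X * derivative (f * g) - f * (X * derivative g) := by
    rw [derivative_mul]; ring
  rw [show X ^ 2 * (f * g) = f * (X ^ 2 * g) by ring, hf, hf] at hEuler
  rw [hsplit, map_sub, hf]
  linarith

theorem X_pow_mem_shapRadical_iff (N : ℕ) :
    X ^ N ∈ shapRadical k ↔ ∀ b, shapWeight k (N + b) = 0 := by
  simp only [mem_shapRadical, shapForm_eq_shapFunctional_mul]
  refine ⟨fun h b => ?_, fun h g => ?_⟩
  · have := h (X ^ b)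
    rwa [← pow_add, X_pow_eq_monomial, shapFunctional_monomial, one_mul] at this
  · induction g using Polynomial.induction_on' with
    | add p q hp hq => rw [mul_add, map_add, hp, hq, add_zero]
    | monomial b c => rw [X_pow_mul_monomial, shapFunctional_monomial, add_comm, h, mul_zero]

end Shapovalov

theorem shapForm_symm_and_degenerate_iff (k : ℝ) :
    (∀ f g : ℝ[X], shapForm k f g = shapForm k g f) ∧
    ((∃ f : ℝ[X], f ≠ 0 ∧ ∀ g : ℝ[X], shapForm k f g = 0) ↔
      ∃ m : ℕ, k = -(1/2) - m) := by
  refine ⟨fun f g => by simp only [shapForm_eq_shapFunctional_mul, mul_comm],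
    fun ⟨f, hf0, hf⟩ => ?_, fun ⟨m, hm⟩ => ?_⟩
  · obtain ⟨n, hn⟩ := exists_X_pow_mem_of_X_mul_derivative_mem
      (fun _ => X_mul_derivative_mem_shapRadical) (mem_shapRadical.2 hf) hf0
    have hweight : shapWeight k (2 * n) = 0 := two_mul n ▸ (X_pow_mem_shapRadical_iff n).1 hn n
    obtain ⟨i, -, hi⟩ := (shapWeight_two_mul_eq_zero_iff k n).1 hweight
    exact ⟨i, hi⟩
  · refine ⟨X ^ (2 * m + 2), pow_ne_zero _ X_ne_zero,
      mem_shapRadical.1 ((X_pow_mem_shapRadical_iff _).2 fun b =>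
        shapWeight_eq_zero_of_le k hm (Nat.le_add_right _ b))⟩
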